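/- Assume that none of β+ρ, 2α+ρ, 2β+2ζ, 2α+β+2ζ, 2α−β, β+2ζ−ρ is an integer. For 0 ≤ m, n ≤ N set α̂ = −β−ρ−1, β̂ = −β+ρ−2ζ−1, γ̂ = N−2α−ρ, and define f_n(ℓ) = [(β+ρ−N+1)_{N−n} / ((n−N)_{N−n} (2α+ρ−N−n)_{N−n})] · (n−N)_{N−ℓ} (2α+ρ−N−n)_{N−ℓ} / (β+ρ−N+1)_{N−ℓ} and e*_m(ℓ) = [(−N)_{N−m} (m+N−2α−β−2ζ)_{N−m} / (2β+2ζ−N−m+1)_{N−m}] · (m−N)_{N−ℓ} (2β+2ζ−N−m+1)_{N−ℓ} / ((N−ℓ)! (−N)_{N−ℓ} (2α+β+2ζ−2N+1)_{N−ℓ}). Then Σ_{ℓ=0}^{N} f_n(ℓ) e*_m(ℓ) = (−1)^N (−N)_{N−m} (γ̂−α̂−N)_{N−m} (−β̂−N)_{N−m} (α̂+1)_m (−γ̂−β̂−n)_n / [(−N−m−α̂−β̂−1)_{N−m} (n−N)_{N−n} (−γ̂−n)_{N−n} (γ̂−α̂−N)_n (−N−β̂)_n] · R_m(n; α̂, β̂,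 γ̂, N). -/

import Mathlib

set_option maxHeartbeats 2000000


/-- The Pochhammer symbol `(a)_k = a(a+1)⋯(a+k−1)`. -/
noncomputable def poch (a : ℝ) (k : ℕ) : ℝ := ∏ i ∈ Finset.range k, (a + i)

lemma poch_zero (a : ℝ) : poch a 0 = 1 := by simp [poch]

lemma poch_succ (a : ℝ) (k : ℕ) : poch a (k+1) = poch a k * (a + k) := by
  simp [poch, Finset.prod_range_succ]

lemma poch_succ' (a : ℝ) (k : ℕ) : poch a (k+1) = a * poch (a+1) k := by
  simp only [poch, Finset.prod_range_succ']
  rw [mul_comm]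
  congr 1
  · norm_num
  · apply Finset.prod_congr rfl; intro i _; push_cast; ring

lemma poch_add (a : ℝ) (j k : ℕ) : poch a (j+k) = poch a j * poch (a+j) k := by
  simp only [poch, Finset.prod_range_add]
  congr 1
  apply Finset.prod_congr rfl; intro i _; push_cast; ring

lemma poch_reverse (a : ℝ) (k : ℕ) : poch a k = (-1)^k * poch (1 - a - k) k := by
  rw [poch, poch, ← Finset.prod_range_reflect]
  have h : ∀ j ∈ Finset.range k, (a + ((k - 1 - j : ℕ) : ℝ)) = (-1) * (1 - a - k + j) := by
    intro j hj
    rw [Finset.mem_range] at hj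
    have h1 : j ≤ k - 1 := Nat.le_sub_one_of_lt hj
    have h2 : 1 ≤ k := Nat.one_le_iff_ne_zero.mpr (by omega)
    push_cast [Nat.cast_sub h1, Nat.cast_sub h2]
    ring
  rw [Finset.prod_congr rfl h, Finset.prod_mul_distrib, Finset.prod_const, Finset.card_range]

lemma poch_ne_zero_of_le (a : ℝ) {j M : ℕ} (h : j ≤ M) (hM : poch a M ≠ 0) :
    poch a j ≠ 0 := by
  have := poch_add a j (M - j)
  rw [Nat.add_sub_cancel' h] at this
  intro h0; rw [this, h0, zero_mul] at hM; exact hM rfl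

lemma poch_ne_zero_of_noninteger {a : ℝ} (h : ∀ z : ℤ, a ≠ (z : ℝ)) (k : ℕ) :
    poch a k ≠ 0 := by
  rw [poch, Finset.prod_ne_zero_iff]
  intro i _
  intro h0
  exact h (-(i : ℤ)) (by push_cast; linarith)

lemma poch_neg_nat_eq_zero {M k : ℕ} (h : M < k) : poch (-(M : ℝ)) k = 0 := by
  rw [poch]
  apply Finset.prod_eq_zero (Finset.mem_range.mpr h)
  simp

lemma poch_neg_nat_ne_zero {j M : ℕ} (h : j ≤ M) : poch (-(M : ℝ)) j ≠ 0 := by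
  rw [poch, Finset.prod_ne_zero_iff]
  intro i hi
  rw [Finset.mem_range] at hi
  have : (i : ℝ) < (M : ℝ) := by exact_mod_cast lt_of_lt_of_le hi h
  intro h0; linarith

lemma poch_neg_fact (i : ℕ) : ∀ s : ℕ,
    poch (-((i + s : ℕ) : ℝ)) i * (-1)^i * (s.factorial : ℝ) = ((i+s).factorial : ℝ) := by
  induction i with
  | zero => intro s; simp [poch]
  | succ i ih =>
    intro s
    have h1 : poch (-((i + 1 + s : ℕ) : ℝ)) (i + 1)
        = poch (-((i + (s+1) : ℕ) : ℝ)) i * (-((i+1+s : ℕ) : ℝ) + i) := by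
      rw [show (i+1+s) = i + (s+1) by omega]
      simp [poch, Finset.prod_range_succ]
    have h2 : (-((i+1+s : ℕ) : ℝ) + i) = -((s : ℝ) + 1) := by push_cast; ring
    rw [h1, h2]
    have h3 : ((i + 1 + s).factorial : ℝ) = ((i + (s+1)).factorial : ℝ) := by
      norm_num; congr 1; omega
    rw [h3, ← ih (s+1)]
    push_cast [Nat.factorial_succ]
    ring

lemma sum_range_extend {f : ℕ → ℝ} {M K : ℕ} (h : M ≤ K) (hz : ∀ j, M < j → f j = 0) :
    ∑ j ∈ Finset.range (M+1), f j = ∑ j ∈ Finset.range (K+1), f j := by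
  apply Finset.sum_subset
  · exact Finset.range_subset_range.mpr (by omega)
  · intro x _ hx
    rw [Finset.mem_range, not_lt] at hx
    exact hz x (by omega)

lemma sum_triangle (M : ℕ) (g : ℕ → ℕ → ℝ) :
    ∑ j ∈ Finset.range (M+1), ∑ i ∈ Finset.range (j+1), g i j
      = ∑ i ∈ Finset.range (M+1), ∑ s ∈ Finset.range (M+1-i), g i (i+s) := by
  rw [Finset.sum_comm' (t' := Finset.range (M+1))
      (s' := fun i => Finset.Ico i (M+1))]
  · apply Finset.sum_congr rfl
    intro i _
    rw [Finset.sum_Ico_eq_sum_range]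
  · intro j i
    simp only [Finset.mem_range, Finset.mem_Ico]
    omega

lemma chu_cleared (M : ℕ) : ∀ b c : ℝ,
    ∑ j ∈ Finset.range (M+1),
      (-1)^j * (M.choose j : ℝ) * poch b j * poch (c + j) (M - j) = poch (c - b) M := by
  induction M with
  | zero => intro b c; simp [poch]
  | succ M ih =>
    intro b c
    have hA : ∑ j ∈ Finset.range (M+2),
        (-1 : ℝ)^j * (M.choose j : ℝ) * poch b j * poch (c + j) (M + 1 - j)
        = (c + M) * poch (c - b) M := by
      rw [Finset.sum_range_succ]
      have hlast : (-1 : ℝ)^(M+1) * (M.choose (M+1) : ℝ) * poch b (M+1) * poch (c + (M+1 : ℕ)) (M + 1 - (M+1)) = 0 := by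
        rw [Nat.choose_succ_self]; norm_num
      rw [hlast, add_zero, ← ih b c, Finset.mul_sum]
      apply Finset.sum_congr rfl
      intro j hj
      rw [Finset.mem_range] at hj
      have hsub : M + 1 - j = (M - j) + 1 := by omega
      have hstep : poch (c + j) ((M - j) + 1) = poch (c + j) (M - j) * (c + M) := by
        rw [poch_succ]
        congr 1
        have : ((M - j : ℕ) : ℝ) = (M : ℝ) - j := by
          have : j ≤ M := by omega
          push_cast [Nat.cast_sub this]; ring
        rw [this]; ring
      rw [hsub, hstep]; ring
    rw [Finset.sum_range_succ']
    have e0 : (-1 : ℝ)^0 * (((M+1).choose 0 : ℕ) : ℝ) * poch b 0 * poch (c + ((0:ℕ) : ℝ)) (M + 1 - 0)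
        = poch c (M+1) := by norm_num [poch]
    have epeel : ∀ i ∈ Finset.range (M+1),
        (-1 : ℝ)^(i+1) * (((M+1).choose (i+1) : ℕ) : ℝ) * poch b (i+1) * poch (c + ((i+1 : ℕ) : ℝ)) (M + 1 - (i+1))
        = -((-1 : ℝ)^i * (M.choose i : ℝ) * (b * poch (b+1) i) * poch ((c+1) + (i:ℝ)) (M - i))
          + ((-1 : ℝ)^(i+1) * (M.choose (i+1) : ℝ) * poch b (i+1) * poch (c + ((i+1 : ℕ) : ℝ)) (M + 1 - (i+1))) := by
      intro i hi
      have hch : (((M+1).choose (i+1) : ℕ) : ℝ) = (M.choose i : ℝ) + (M.choose (i+1) : ℝ) := by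
        rw [Nat.choose_succ_succ]; push_cast; ring
      have hsub : M + 1 - (i+1) = M - i := by omega
      have hbase : (c + ((i+1 : ℕ) : ℝ)) = ((c+1) + (i:ℝ)) := by push_cast; ring
      have hpb : poch b (i+1) = b * poch (b+1) i := poch_succ' b i
      rw [hch, hsub, hbase, hpb]
      ring
    rw [Finset.sum_congr rfl epeel, e0, Finset.sum_add_distrib]
    have S1 : ∑ i ∈ Finset.range (M+1),
        -((-1 : ℝ)^i * (M.choose i : ℝ) * (b * poch (b+1) i) * poch ((c+1) + (i:ℝ)) (M - i))
        = -(b * poch (c - b) M) := by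
      have := ih (b+1) (c+1)
      have hcb : (c+1) - (b+1) = c - b := by ring
      rw [hcb] at this
      rw [← this, Finset.mul_sum, ← Finset.sum_neg_distrib]
      apply Finset.sum_congr rfl
      intro i _
      push_cast
      ring
    have S2 : ∑ i ∈ Finset.range (M+1),
        ((-1 : ℝ)^(i+1) * (M.choose (i+1) : ℝ) * poch b (i+1) * poch (c + ((i+1 : ℕ) : ℝ)) (M + 1 - (i+1)))
        = (c + M) * poch (c - b) M - poch c (M+1) := by
      have := hA
      rw [Finset.sum_range_succ'] at this
      have h0 : (-1 : ℝ)^0 * ((M.choose 0 : ℕ) : ℝ) * poch b 0 * poch (c + ((0:ℕ) : ℝ)) (M + 1 - 0) = poch c (M+1) := by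
        norm_num [poch]
      rw [h0] at this
      linarith [this]
    rw [S1, S2]
    rw [poch_succ (c-b) M]
    ring

lemma poch_neg_nat_eq_choose {M j : ℕ} (h : j ≤ M) :
    poch (-(M : ℝ)) j = (-1)^j * (M.choose j : ℝ) * (j.factorial : ℝ) := by
  have h1 := poch_neg_fact j (M - j)
  rw [show j + (M - j) = M by omega] at h1
  have h2 : (M.choose j : ℝ) * (j.factorial : ℝ) * ((M-j).factorial : ℝ) = (M.factorial : ℝ) := by
    exact_mod_cast congrArg (Nat.cast : ℕ → ℝ) (Nat.choose_mul_factorial_mul_factorial h)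
  have hsq : (-1 : ℝ)^j * (-1)^j = 1 := by
    rw [← pow_add, ← two_mul, pow_mul]; norm_num
  have hf : ((M-j).factorial : ℝ) ≠ 0 := by positivity
  apply mul_right_cancel₀ hf
  calc poch (-(M:ℝ)) j * ((M-j).factorial : ℝ)
      = (poch (-(M:ℝ)) j * (-1)^j * ((M-j).factorial : ℝ)) * (-1)^j := by
        rw [show poch (-(M:ℝ)) j * (-1)^j * ((M-j).factorial : ℝ) * (-1)^j
            = poch (-(M:ℝ)) j * ((-1:ℝ)^j * (-1)^j) * ((M-j).factorial : ℝ) by ring, hsq]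
        ring
    _ = (M.factorial : ℝ) * (-1)^j := by rw [h1]
    _ = (-1)^j * (M.choose j : ℝ) * (j.factorial : ℝ) * ((M-j).factorial : ℝ) := by
        rw [← h2]; ring

lemma chu (M : ℕ) (b c : ℝ) (hc : poch c M ≠ 0) :
    ∑ j ∈ Finset.range (M+1), poch (-(M:ℝ)) j * poch b j / (poch c j * (j.factorial : ℝ))
      = poch (c - b) M / poch c M := by
  rw [← chu_cleared M b c, Finset.sum_div]
  apply Finset.sum_congr rfl
  intro j hj
  rw [Finset.mem_range] at hj
  have hjM : j ≤ M := by omega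
  have hsplit : poch c M = poch c j * poch (c + j) (M - j) := by
    have := poch_add c j (M - j)
    rw [show j + (M - j) = M by omega] at this
    exact this
  have hcj : poch c j ≠ 0 := poch_ne_zero_of_le c hjM hc
  have hcj2 : poch (c + j) (M - j) ≠ 0 := by
    intro h0; rw [hsplit, h0, mul_zero] at hc; exact hc rfl
  have hfj : (j.factorial : ℝ) ≠ 0 := by positivity
  rw [poch_neg_nat_eq_choose hjM]
  rw [hsplit]
  field_simp

lemma poch_neg_fact' (i s : ℕ) :
    poch (-((i+s : ℕ) : ℝ)) i = (-1)^i * ((i+s).factorial : ℝ) / (s.factorial : ℝ) := by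
  have h1 := poch_neg_fact i s
  have hsq : (-1 : ℝ)^i * (-1)^i = 1 := by
    rw [← pow_add, ← two_mul, pow_mul]; norm_num
  have hf : (s.factorial : ℝ) ≠ 0 := by positivity
  rw [eq_div_iff hf]
  calc poch (-((i+s : ℕ) : ℝ)) i * (s.factorial : ℝ)
      = poch (-((i+s : ℕ) : ℝ)) i * (s.factorial : ℝ) * ((-1:ℝ)^i * (-1)^i) := by
        rw [hsq, mul_one]
    _ = (poch (-((i+s : ℕ) : ℝ)) i * (-1)^i * (s.factorial : ℝ)) * (-1)^i := by ring
    _ = ((i+s).factorial : ℝ) * (-1)^i := by rw [h1]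
    _ = (-1)^i * ((i+s).factorial : ℝ) := by ring

lemma neg_cast_shift {M i : ℕ} (h : i ≤ M) : (-(M : ℝ) + i) = -(((M - i : ℕ)) : ℝ) := by
  push_cast [Nat.cast_sub h]; ring

lemma saalschutz (M : ℕ) (A B C D : ℝ) (hD : D = 1 + A + B - C - M)
    (hC : poch C M ≠ 0) (hD0 : poch D M ≠ 0) :
    ∑ j ∈ Finset.range (M+1),
      poch (-(M:ℝ)) j * poch A j * poch B j / (poch C j * poch D j * (j.factorial : ℝ))
      = poch (C - A) M * poch (D - A) M / (poch C M * poch D M) := by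
  have hDB : D - B = 1 + A - C - M := by rw [hD]; ring
  have expand : ∀ j ∈ Finset.range (M+1),
      poch (-(M:ℝ)) j * poch A j * poch B j / (poch C j * poch D j * (j.factorial : ℝ))
      = ∑ i ∈ Finset.range (j+1),
          (poch (-(M:ℝ)) j * poch A j / (poch C j * (j.factorial : ℝ)))
            * (poch (-(j:ℝ)) i * poch (D-B) i / (poch D i * (i.factorial : ℝ))) := by
    intro j hj
    rw [Finset.mem_range] at hj
    rw [← Finset.mul_sum, chu j (D-B) D (poch_ne_zero_of_le D (by omega) hD0)]
    rw [show D - (D - B) = B by ring]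
    ring
  rw [Finset.sum_congr rfl expand, sum_triangle]
  have inner : ∀ i ∈ Finset.range (M+1),
      ∑ s ∈ Finset.range (M+1-i),
        (poch (-(M:ℝ)) (i+s) * poch A (i+s) / (poch C (i+s) * ((i+s).factorial : ℝ)))
          * (poch (-((i+s : ℕ):ℝ)) i * poch (D-B) i / (poch D i * (i.factorial : ℝ)))
      = (poch (C-A) M / poch C M)
          * (poch (-(M:ℝ)) i * poch A i / (poch D i * (i.factorial : ℝ))) := by
    intro i hi
    rw [Finset.mem_range] at hi
    have hiM : i ≤ M := by omega
    have hsplitC : poch C M = poch C i * poch (C + i) (M - i) := by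
      have := poch_add C i (M - i); rw [show i + (M - i) = M by omega] at this; exact this
    have hCi : poch C i ≠ 0 := poch_ne_zero_of_le C hiM hC
    have hDi : poch D i ≠ 0 := poch_ne_zero_of_le D hiM hD0
    have hCi2 : poch (C + (i:ℝ)) (M - i) ≠ 0 := by
      intro h0; rw [hsplitC, h0, mul_zero] at hC; exact hC rfl
    have hsq : (-1 : ℝ)^i * (-1)^i = 1 := by
      rw [← pow_add, ← two_mul, pow_mul]; norm_num
    have key2 : poch (D-B) i * ((-1:ℝ))^i * poch (C-A) (M-i) = poch (C-A) M := by
      have hrev : poch (D-B) i = (-1)^i * poch ((C-A) + ((M-i : ℕ) : ℝ)) i := by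
        rw [hDB, poch_reverse (1 + A - C - M) i]
        congr 2
        push_cast [Nat.cast_sub hiM]; ring
      have hadd : poch (C-A) M = poch (C-A) (M-i) * poch ((C-A) + ((M-i : ℕ) : ℝ)) i := by
        have := poch_add (C-A) (M-i) i; rw [show (M-i) + i = M by omega] at this; exact this
      rw [hrev, hadd]
      calc (-1:ℝ)^i * poch ((C-A) + ((M-i : ℕ) : ℝ)) i * (-1)^i * poch (C-A) (M-i)
          = ((-1:ℝ)^i * (-1)^i) * (poch ((C-A) + ((M-i : ℕ) : ℝ)) i * poch (C-A) (M-i)) := by ring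
        _ = poch (C-A) (M-i) * poch ((C-A) + ((M-i : ℕ) : ℝ)) i := by rw [hsq]; ring
    have hterm : ∀ s ∈ Finset.range (M+1-i),
        (poch (-(M:ℝ)) (i+s) * poch A (i+s) / (poch C (i+s) * ((i+s).factorial : ℝ)))
          * (poch (-((i+s : ℕ):ℝ)) i * poch (D-B) i / (poch D i * (i.factorial : ℝ)))
        = ((poch (-(M:ℝ)) i * poch A i * poch (D-B) i * (-1)^i) / (poch C i * poch D i * (i.factorial : ℝ)))
            * (poch (-((M-i : ℕ):ℝ)) s * poch (A+(i:ℝ)) s / (poch (C+(i:ℝ)) s * (s.factorial : ℝ))) := by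
      intro s hs
      rw [Finset.mem_range] at hs
      have hisM : i + s ≤ M := by omega
      rw [poch_add (-(M:ℝ)) i s, poch_add A i s, poch_add C i s, poch_neg_fact' i s,
          neg_cast_shift hiM]
      have hCis : poch C i * poch (C + (i:ℝ)) s ≠ 0 := by
        have h' : poch C (i+s) ≠ 0 := poch_ne_zero_of_le C hisM hC
        rw [poch_add C i s] at h'; exact h'
      have hCs : poch (C + (i:ℝ)) s ≠ 0 := by
        intro h0; rw [h0, mul_zero] at hCis; exact hCis rfl
      have hf1 : ((i+s).factorial : ℝ) ≠ 0 := by positivity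
      have hf2 : (s.factorial : ℝ) ≠ 0 := by positivity
      have hf3 : (i.factorial : ℝ) ≠ 0 := by positivity
      field_simp
    rw [Finset.sum_congr rfl hterm, ← Finset.mul_sum]
    rw [show M + 1 - i = (M - i) + 1 by omega, chu (M-i) (A+(i:ℝ)) (C+(i:ℝ)) hCi2]
    rw [show C + (i:ℝ) - (A + (i:ℝ)) = C - A by ring]
    rw [← key2, hsplitC]
    ring
  rw [Finset.sum_congr rfl inner, ← Finset.mul_sum, chu M A D hD0]
  ring

lemma neg_one_sq_pow (i : ℕ) : (-1 : ℝ)^i * (-1)^i = 1 := by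
  rw [← pow_add, ← two_mul, pow_mul]; norm_num

lemma sears (M : ℕ) (x y z u v w : ℝ) (hbal : u + v + w = x + y + z + 1 - M)
    (hu : poch u M ≠ 0) (hv : poch v M ≠ 0) (hw : poch w M ≠ 0)
    (hth : poch (y + z - v) M ≠ 0) :
    ∑ j ∈ Finset.range (M+1),
      poch (-(M:ℝ)) j * poch x j * poch y j * poch z j
        / (poch u j * poch v j * poch w j * (j.factorial : ℝ))
      = (∑ i ∈ Finset.range (M+1),
          poch (-(M:ℝ)) i * poch x i * poch (v-y) i * poch (v-z) i
            * (poch (u-x) (M-i) * poch (w-x) (M-i))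
            / (poch v i * (i.factorial : ℝ)))
        / (poch u M * poch w M) := by
  set θ : ℝ := y + z - v with hθ
  have expand : ∀ j ∈ Finset.range (M+1),
      poch (-(M:ℝ)) j * poch x j * poch y j * poch z j
        / (poch u j * poch v j * poch w j * (j.factorial : ℝ))
      = ∑ i ∈ Finset.range (j+1),
          (poch (-(M:ℝ)) j * poch x j * poch θ j / (poch u j * poch w j * (j.factorial : ℝ)))
            * (poch (-(j:ℝ)) i * poch (v-y) i * poch (v-z) i
                / (poch v i * poch (1 - θ - (j:ℝ)) i * (i.factorial : ℝ))) := by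
    intro j hj
    rw [Finset.mem_range] at hj
    have hjM : j ≤ M := by omega
    have hvj : poch v j ≠ 0 := poch_ne_zero_of_le v hjM hv
    have hthj : poch θ j ≠ 0 := poch_ne_zero_of_le θ hjM hth
    have huj : poch u j ≠ 0 := poch_ne_zero_of_le u hjM hu
    have hwj : poch w j ≠ 0 := poch_ne_zero_of_le w hjM hw
    have hfj : (j.factorial : ℝ) ≠ 0 := by positivity
    have hDrev : poch (1 - θ - (j:ℝ)) j = (-1)^j * poch θ j := by
      rw [poch_reverse θ j]
      rw [show (-1:ℝ)^j * ((-1)^j * poch (1 - θ - (j:ℝ)) j) = ((-1:ℝ)^j * (-1)^j) * poch (1 - θ - (j:ℝ)) j by ring,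
          neg_one_sq_pow, one_mul]
    have hzrev : poch (1 - z - (j:ℝ)) j = (-1)^j * poch z j := by
      rw [poch_reverse z j]
      rw [show (-1:ℝ)^j * ((-1)^j * poch (1 - z - (j:ℝ)) j) = ((-1:ℝ)^j * (-1)^j) * poch (1 - z - (j:ℝ)) j by ring,
          neg_one_sq_pow, one_mul]
    have hD0j : poch (1 - θ - (j:ℝ)) j ≠ 0 := by
      rw [hDrev]
      exact mul_ne_zero (pow_ne_zero j (by norm_num)) hthj
    have PS := saalschutz j (v-y) (v-z) v (1 - θ - (j:ℝ))
      (by rw [hθ]; ring) hvj hD0j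
    rw [show v - (v-y) = y by ring, show 1 - θ - (j:ℝ) - (v-y) = 1 - z - (j:ℝ) by rw [hθ]; ring] at PS
    rw [← Finset.mul_sum, PS, hzrev, hDrev]
    have hne : (-1 : ℝ)^j ≠ 0 := pow_ne_zero j (by norm_num)
    field_simp
  rw [Finset.sum_congr rfl expand, sum_triangle]
  have inner : ∀ i ∈ Finset.range (M+1),
      ∑ s ∈ Finset.range (M+1-i),
        (poch (-(M:ℝ)) (i+s) * poch x (i+s) * poch θ (i+s)
            / (poch u (i+s) * poch w (i+s) * ((i+s).factorial : ℝ)))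
          * (poch (-((i+s : ℕ):ℝ)) i * poch (v-y) i * poch (v-z) i
              / (poch v i * poch (1 - θ - ((i+s : ℕ):ℝ)) i * (i.factorial : ℝ)))
      = (poch (-(M:ℝ)) i * poch x i * poch (v-y) i * poch (v-z) i
            * (poch (u-x) (M-i) * poch (w-x) (M-i))
            / (poch v i * (i.factorial : ℝ)))
          / (poch u M * poch w M) := by
    intro i hi
    rw [Finset.mem_range] at hi
    have hiM : i ≤ M := by omega
    have hsplitU : poch u M = poch u i * poch (u + (i:ℝ)) (M - i) := by
      have := poch_add u i (M - i); rw [show i + (M - i) = M by omega] at this; exact this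
    have hsplitW : poch w M = poch w i * poch (w + (i:ℝ)) (M - i) := by
      have := poch_add w i (M - i); rw [show i + (M - i) = M by omega] at this; exact this
    have hui : poch u i ≠ 0 := poch_ne_zero_of_le u hiM hu
    have hwi : poch w i ≠ 0 := poch_ne_zero_of_le w hiM hw
    have hvi : poch v i ≠ 0 := poch_ne_zero_of_le v hiM hv
    have hu2 : poch (u + (i:ℝ)) (M - i) ≠ 0 := by
      intro h0; rw [hsplitU, h0, mul_zero] at hu; exact hu rfl
    have hw2 : poch (w + (i:ℝ)) (M - i) ≠ 0 := by
      intro h0; rw [hsplitW, h0, mul_zero] at hw; exact hw rfl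
    have hterm : ∀ s ∈ Finset.range (M+1-i),
        (poch (-(M:ℝ)) (i+s) * poch x (i+s) * poch θ (i+s)
            / (poch u (i+s) * poch w (i+s) * ((i+s).factorial : ℝ)))
          * (poch (-((i+s : ℕ):ℝ)) i * poch (v-y) i * poch (v-z) i
              / (poch v i * poch (1 - θ - ((i+s : ℕ):ℝ)) i * (i.factorial : ℝ)))
        = (poch (-(M:ℝ)) i * poch x i * poch (v-y) i * poch (v-z) i
              / (poch u i * poch v i * poch w i * (i.factorial : ℝ)))
            * (poch (-((M-i : ℕ):ℝ)) s * poch (x+(i:ℝ)) s * poch θ s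
                / (poch (u+(i:ℝ)) s * poch (w+(i:ℝ)) s * (s.factorial : ℝ))) := by
      intro s hs
      rw [Finset.mem_range] at hs
      have hisM : i + s ≤ M := by omega
      have hθis : poch θ (i+s) ≠ 0 := poch_ne_zero_of_le θ hisM hth
      have hsplitθ : poch θ (i+s) = poch θ s * poch (θ + (s:ℝ)) i := by
        have := poch_add θ s i; rw [show s + i = i + s by omega] at this; exact this
      have hθsi : poch (θ + (s:ℝ)) i ≠ 0 := by
        intro h0; rw [hsplitθ, h0, mul_zero] at hθis; exact hθis rfl
      have hrevθ : poch (1 - θ - ((i+s : ℕ):ℝ)) i = (-1)^i * poch (θ + (s:ℝ)) i := by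
        have h' := poch_reverse (θ + (s:ℝ)) i
        rw [show 1 - (θ + (s:ℝ)) - (i:ℝ) = 1 - θ - ((i+s : ℕ):ℝ) by push_cast; ring] at h'
        rw [h']
        rw [show (-1:ℝ)^i * ((-1)^i * poch (1 - θ - ((i+s : ℕ):ℝ)) i) = ((-1:ℝ)^i * (-1)^i) * poch (1 - θ - ((i+s : ℕ):ℝ)) i by ring,
            neg_one_sq_pow, one_mul]
      have hsplitM : poch (-(M:ℝ)) (i+s) = poch (-(M:ℝ)) i * poch (-((M-i : ℕ):ℝ)) s := by
        rw [poch_add (-(M:ℝ)) i s, neg_cast_shift hiM]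
      have huis : poch u (i+s) ≠ 0 := poch_ne_zero_of_le u hisM hu
      have hwis : poch w (i+s) ≠ 0 := poch_ne_zero_of_le w hisM hw
      have hu2s : poch (u + (i:ℝ)) s ≠ 0 := by
        intro h0; rw [poch_add u i s, h0, mul_zero] at huis; exact huis rfl
      have hw2s : poch (w + (i:ℝ)) s ≠ 0 := by
        intro h0; rw [poch_add w i s, h0, mul_zero] at hwis; exact hwis rfl
      have hf1 : ((i+s).factorial : ℝ) ≠ 0 := by positivity
      have hf2 : (s.factorial : ℝ) ≠ 0 := by positivity
      have hf3 : (i.factorial : ℝ) ≠ 0 := by positivity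
      have hne : (-1 : ℝ)^i ≠ 0 := pow_ne_zero i (by norm_num)
      rw [hsplitM, poch_add x i s, poch_add u i s, poch_add w i s, hsplitθ, hrevθ,
          poch_neg_fact' i s]
      field_simp
    rw [Finset.sum_congr rfl hterm, ← Finset.mul_sum]
    rw [show M + 1 - i = (M - i) + 1 by omega]
    have PS2 := saalschutz (M-i) (x+(i:ℝ)) θ (u+(i:ℝ)) (w+(i:ℝ))
      (by rw [hθ]; push_cast [Nat.cast_sub hiM]; linarith [hbal]) hu2 hw2
    rw [PS2]
    rw [show u + (i:ℝ) - (x + (i:ℝ)) = u - x by ring, show w + (i:ℝ) - (x + (i:ℝ)) = w - x by ring]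
    rw [hsplitU, hsplitW]
    ring
  rw [Finset.sum_congr rfl inner, ← Finset.sum_div]

lemma pcongr {a b : ℝ} (h : a = b) (k : ℕ) : poch a k = poch b k := by rw [h]

lemma poch_tail_pair (g1 g2 : ℝ) {M i : ℕ} (hiM : i ≤ M)
    (h1 : poch (1-g1-(M:ℝ)) i ≠ 0) (h2 : poch (1-g2-(M:ℝ)) i ≠ 0) :
    poch g1 (M-i) * poch g2 (M-i)
      = poch g1 M * poch g2 M / (poch (1-g1-(M:ℝ)) i * poch (1-g2-(M:ℝ)) i) := by
  have key : ∀ g : ℝ, poch g M * (-1:ℝ)^i = poch g (M-i) * poch (1-g-(M:ℝ)) i := by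
    intro g
    have hadd : poch g M = poch g (M-i) * poch (g + ((M-i : ℕ) : ℝ)) i := by
      have := poch_add g (M-i) i; rw [show (M-i) + i = M by omega] at this; exact this
    have hrev : poch (1-g-(M:ℝ)) i = (-1)^i * poch (g + ((M-i : ℕ) : ℝ)) i := by
      have h' := poch_reverse (g + ((M-i : ℕ) : ℝ)) i
      rw [show 1 - (g + ((M-i : ℕ) : ℝ)) - (i:ℝ) = 1 - g - (M:ℝ) by
        push_cast [Nat.cast_sub hiM]; ring] at h'
      rw [h']
      rw [show (-1:ℝ)^i * ((-1)^i * poch (1-g-(M:ℝ)) i) = ((-1:ℝ)^i * (-1)^i) * poch (1-g-(M:ℝ)) i by ring,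
          neg_one_sq_pow, one_mul]
    rw [hadd, hrev]; ring
  have k1 := key g1
  have k2 := key g2
  rw [eq_div_iff (mul_ne_zero h1 h2)]
  calc poch g1 (M-i) * poch g2 (M-i) * (poch (1-g1-(M:ℝ)) i * poch (1-g2-(M:ℝ)) i)
      = (poch g1 (M-i) * poch (1-g1-(M:ℝ)) i) * (poch g2 (M-i) * poch (1-g2-(M:ℝ)) i) := by ring
    _ = (poch g1 M * (-1:ℝ)^i) * (poch g2 M * (-1:ℝ)^i) := by rw [k1, k2]
    _ = poch g1 M * poch g2 M * ((-1:ℝ)^i * (-1:ℝ)^i) := by ring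
    _ = poch g1 M * poch g2 M := by rw [neg_one_sq_pow, mul_one]

lemma core (N m n : ℕ) (hm : m ≤ N) (hn : n ≤ N) (a b c : ℝ)
    (ha : ∀ z : ℤ, a ≠ (z : ℝ)) (hbz : ∀ z : ℤ, b ≠ (z : ℝ)) (hcz : ∀ z : ℤ, c ≠ (z : ℝ))
    (hbca : ∀ z : ℤ, b + c - a ≠ (z : ℝ)) (hab : ∀ z : ℤ, a - b ≠ (z : ℝ))
    (hac : ∀ z : ℤ, a - c ≠ (z : ℝ)) :
    ∑ k ∈ Finset.range (m+1),
      poch (-(m:ℝ)) k * poch ((m:ℝ)-c-1) k * poch (-(n:ℝ)) k * poch ((n:ℝ)-b) k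
        / (poch (-a) k * poch (-(N:ℝ)) k * poch ((N:ℝ)+a-b-c) k * (k.factorial : ℝ))
      = (poch (c+1-a-(m:ℝ)) m * poch ((N:ℝ)+a+1-b-(m:ℝ)) m
          / (poch (-a) m * poch ((N:ℝ)+a-b-c) m))
        * ((poch ((N:ℝ)+(n:ℝ)+a-b-c) (N-n) * poch ((n:ℝ)-a) (N-n))
          / (poch (a-c) (N-n) * poch (b-(N:ℝ)-a) (N-n)))
        * ∑ j ∈ Finset.range (N+1),
            poch ((n:ℝ)-(N:ℝ)) j * poch ((m:ℝ)-(N:ℝ)) j * poch (b-(N:ℝ)-(n:ℝ)) j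
              * poch (c+1-(N:ℝ)-(m:ℝ)) j
              / (poch (a+1-(N:ℝ)) j * poch (-(N:ℝ)) j * poch (b+c-a+1-2*(N:ℝ)) j
                  * (j.factorial : ℝ)) := by
  -- noninteger nonvanishing facts
  have pA : ∀ k, poch (-a) k ≠ 0 := fun k => poch_ne_zero_of_noninteger
    (fun z h0 => ha (-z) (by push_cast; linarith)) k
  have paN : ∀ k, poch (a+1-(N:ℝ)) k ≠ 0 := fun k => poch_ne_zero_of_noninteger
    (fun z h0 => ha ((z:ℤ) - 1 + (N:ℤ)) (by push_cast; linarith)) k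
  have pNabc : ∀ k, poch ((N:ℝ)+a-b-c) k ≠ 0 := fun k => poch_ne_zero_of_noninteger
    (fun z h0 => hbca ((N:ℤ) - z) (by push_cast; linarith)) k
  have pbca2 : ∀ k, poch (b+c-a+1-2*(N:ℝ)) k ≠ 0 := fun k => poch_ne_zero_of_noninteger
    (fun z h0 => hbca ((z:ℤ) - 1 + 2*(N:ℤ)) (by push_cast; linarith)) k
  have pac : ∀ k, poch (a-c) k ≠ 0 := fun k => poch_ne_zero_of_noninteger
    (fun z h0 => hac z (by push_cast; linarith)) k
  have pbNa : ∀ k, poch (b-(N:ℝ)-a) k ≠ 0 := fun k => poch_ne_zero_of_noninteger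
    (fun z h0 => hab (-(z:ℤ) - (N:ℤ)) (by push_cast; linarith)) k
  have pNb : ∀ k, poch ((N:ℝ)-b) k ≠ 0 := fun k => poch_ne_zero_of_noninteger
    (fun z h0 => hbz ((N:ℤ) - z) (by push_cast; linarith)) k
  have pNc : ∀ k, poch ((N:ℝ)-c-1) k ≠ 0 := fun k => poch_ne_zero_of_noninteger
    (fun z h0 => hcz ((N:ℤ) - 1 - z) (by push_cast; linarith)) k
  have hNn : N - n ≤ N := by omega
  -- first Sears transformation
  rw [sears m ((m:ℝ)-c-1) (-(n:ℝ)) ((n:ℝ)-b) (-a) (-(N:ℝ)) ((N:ℝ)+a-b-c)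
      (by push_cast; ring) (pA m) (poch_neg_nat_ne_zero hm) (pNabc m)
      (by rw [pcongr (show -(n:ℝ) + ((n:ℝ)-b) - (-(N:ℝ)) = (N:ℝ)-b by ring) m]; exact pNb m)]
  have trans1 : ∑ i ∈ Finset.range (m+1),
      poch (-(m:ℝ)) i * poch ((m:ℝ)-c-1) i * poch (-(N:ℝ) - -(n:ℝ)) i
        * poch (-(N:ℝ) - ((n:ℝ)-b)) i
        * (poch (-a - ((m:ℝ)-c-1)) (m-i) * poch ((N:ℝ)+a-b-c - ((m:ℝ)-c-1)) (m-i))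
        / (poch (-(N:ℝ)) i * (i.factorial : ℝ))
      = (poch (c+1-a-(m:ℝ)) m * poch ((N:ℝ)+a+1-b-(m:ℝ)) m)
        * ∑ i ∈ Finset.range (m+1),
            poch (-((N-n : ℕ):ℝ)) i * poch (b-(N:ℝ)-(n:ℝ)) i * poch (-(m:ℝ)) i
              * poch ((m:ℝ)-c-1) i
              / (poch (a-c) i * poch (-(N:ℝ)) i * poch (b-(N:ℝ)-a) i * (i.factorial : ℝ)) := by
    rw [Finset.mul_sum]
    apply Finset.sum_congr rfl
    intro i hi
    rw [Finset.mem_range] at hi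
    have him : i ≤ m := by omega
    rw [pcongr (show -(N:ℝ) - -(n:ℝ) = (n:ℝ)-(N:ℝ) by ring) i,
        pcongr (show -(N:ℝ) - ((n:ℝ)-b) = b-(N:ℝ)-(n:ℝ) by ring) i,
        pcongr (show -a - ((m:ℝ)-c-1) = c+1-a-(m:ℝ) by ring) (m-i),
        pcongr (show (N:ℝ)+a-b-c - ((m:ℝ)-c-1) = (N:ℝ)+a+1-b-(m:ℝ) by ring) (m-i),
        poch_tail_pair (c+1-a-(m:ℝ)) ((N:ℝ)+a+1-b-(m:ℝ)) him
          (by rw [pcongr (show 1-(c+1-a-(m:ℝ))-(m:ℝ) = a-c by ring) i]; exact pac i)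
          (by rw [pcongr (show 1-((N:ℝ)+a+1-b-(m:ℝ))-(m:ℝ) = b-(N:ℝ)-a by ring) i]; exact pbNa i),
        pcongr (show 1-(c+1-a-(m:ℝ))-(m:ℝ) = a-c by ring) i,
        pcongr (show 1-((N:ℝ)+a+1-b-(m:ℝ))-(m:ℝ) = b-(N:ℝ)-a by ring) i,
        pcongr (show (n:ℝ)-(N:ℝ) = -((N-n : ℕ):ℝ) by push_cast [Nat.cast_sub hn]; ring) i]
    ring
  rw [trans1]
  -- extend summation range from m to N, then restrict to N-n
  have hvanish1 : ∀ i, m < i →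
      poch (-((N-n : ℕ):ℝ)) i * poch (b-(N:ℝ)-(n:ℝ)) i * poch (-(m:ℝ)) i
        * poch ((m:ℝ)-c-1) i
        / (poch (a-c) i * poch (-(N:ℝ)) i * poch (b-(N:ℝ)-a) i * (i.factorial : ℝ)) = 0 := by
    intro i hi
    rw [poch_neg_nat_eq_zero hi]
    simp
  have hvanish2 : ∀ i, N - n < i →
      poch (-((N-n : ℕ):ℝ)) i * poch (b-(N:ℝ)-(n:ℝ)) i * poch (-(m:ℝ)) i
        * poch ((m:ℝ)-c-1) i
        / (poch (a-c) i * poch (-(N:ℝ)) i * poch (b-(N:ℝ)-a) i * (i.factorial : ℝ)) = 0 := by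
    intro i hi
    rw [poch_neg_nat_eq_zero hi]
    simp
  rw [sum_range_extend hm hvanish1, ← sum_range_extend hNn hvanish2]
  -- second Sears transformation
  rw [sears (N-n) (b-(N:ℝ)-(n:ℝ)) (-(m:ℝ)) ((m:ℝ)-c-1) (a-c) (-(N:ℝ)) (b-(N:ℝ)-a)
      (by push_cast [Nat.cast_sub hn]; ring) (pac (N-n)) (poch_neg_nat_ne_zero hNn) (pbNa (N-n))
      (by rw [pcongr (show -(m:ℝ) + ((m:ℝ)-c-1) - (-(N:ℝ)) = (N:ℝ)-c-1 by ring) (N-n)]; exact pNc (N-n))]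
  have trans2 : ∑ i ∈ Finset.range (N-n+1),
      poch (-((N-n : ℕ):ℝ)) i * poch (b-(N:ℝ)-(n:ℝ)) i * poch (-(N:ℝ) - -(m:ℝ)) i
        * poch (-(N:ℝ) - ((m:ℝ)-c-1)) i
        * (poch (a-c - (b-(N:ℝ)-(n:ℝ))) (N-n-i) * poch (b-(N:ℝ)-a - (b-(N:ℝ)-(n:ℝ))) (N-n-i))
        / (poch (-(N:ℝ)) i * (i.factorial : ℝ))
      = (poch ((N:ℝ)+(n:ℝ)+a-b-c) (N-n) * poch ((n:ℝ)-a) (N-n))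
        * ∑ j ∈ Finset.range (N-n+1),
            poch ((n:ℝ)-(N:ℝ)) j * poch ((m:ℝ)-(N:ℝ)) j * poch (b-(N:ℝ)-(n:ℝ)) j
              * poch (c+1-(N:ℝ)-(m:ℝ)) j
              / (poch (a+1-(N:ℝ)) j * poch (-(N:ℝ)) j * poch (b+c-a+1-2*(N:ℝ)) j
                  * (j.factorial : ℝ)) := by
    rw [Finset.mul_sum]
    apply Finset.sum_congr rfl
    intro i hi
    rw [Finset.mem_range] at hi
    have hiNn : i ≤ N - n := by omega
    rw [pcongr (show -(N:ℝ) - -(m:ℝ) = (m:ℝ)-(N:ℝ) by ring) i,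
        pcongr (show -(N:ℝ) - ((m:ℝ)-c-1) = c+1-(N:ℝ)-(m:ℝ) by ring) i,
        pcongr (show a-c - (b-(N:ℝ)-(n:ℝ)) = (N:ℝ)+(n:ℝ)+a-b-c by ring) (N-n-i),
        pcongr (show b-(N:ℝ)-a - (b-(N:ℝ)-(n:ℝ)) = (n:ℝ)-a by ring) (N-n-i),
        poch_tail_pair ((N:ℝ)+(n:ℝ)+a-b-c) ((n:ℝ)-a) hiNn
          (by rw [pcongr (show 1-((N:ℝ)+(n:ℝ)+a-b-c)-((N-n : ℕ):ℝ) = b+c-a+1-2*(N:ℝ) by push_cast [Nat.cast_sub hn]; ring) i]; exact pbca2 i)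
          (by rw [pcongr (show 1-((n:ℝ)-a)-((N-n : ℕ):ℝ) = a+1-(N:ℝ) by push_cast [Nat.cast_sub hn]; ring) i]; exact paN i),
        pcongr (show 1-((N:ℝ)+(n:ℝ)+a-b-c)-((N-n : ℕ):ℝ) = b+c-a+1-2*(N:ℝ) by push_cast [Nat.cast_sub hn]; ring) i,
        pcongr (show 1-((n:ℝ)-a)-((N-n : ℕ):ℝ) = a+1-(N:ℝ) by push_cast [Nat.cast_sub hn]; ring) i,
        pcongr (show -((N-n : ℕ):ℝ) = (n:ℝ)-(N:ℝ) by push_cast [Nat.cast_sub hn]; ring) i]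
    ring
  rw [trans2]
  -- extend the final sum from N-n to N
  have hvanish3 : ∀ j, N - n < j →
      poch ((n:ℝ)-(N:ℝ)) j * poch ((m:ℝ)-(N:ℝ)) j * poch (b-(N:ℝ)-(n:ℝ)) j
        * poch (c+1-(N:ℝ)-(m:ℝ)) j
        / (poch (a+1-(N:ℝ)) j * poch (-(N:ℝ)) j * poch (b+c-a+1-2*(N:ℝ)) j
            * (j.factorial : ℝ)) = 0 := by
    intro j hj
    rw [pcongr (show (n:ℝ)-(N:ℝ) = -((N-n : ℕ):ℝ) by push_cast [Nat.cast_sub hn]; ring) j,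
        poch_neg_nat_eq_zero hj]
    simp
  rw [sum_range_extend hNn hvanish3]
  ring

/-- The Racah polynomial value
`R_i(x; α̂, β̂, γ̂, N) = Σ_{k=0}^{i} (−i)_k (i+α̂+β̂+1)_k (−x)_k (x+γ̂−N)_k /
  [(α̂+1)_k (β̂+γ̂+1)_k (−N)_k k!]`. -/
noncomputable def racah (ah bh ch : ℝ) (N i x : ℕ) : ℝ :=
  ∑ k ∈ Finset.range (i + 1),
    poch (-(i : ℝ)) k * poch ((i : ℝ) + ah + bh + 1) k * poch (-(x : ℝ)) k
      * poch ((x : ℝ) + ch - (N : ℝ)) k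
      / (poch (ah + 1) k * poch (bh + ch + 1) k * poch (-(N : ℝ)) k
          * (Nat.factorial k : ℝ))

/-- The overlap coefficient `Σ_ℓ f_n(ℓ) e*_m(ℓ)` is given by a Racah
polynomial with parameters `α̂ = −β−ρ−1`, `β̂ = −β+ρ−2ζ−1`, `γ̂ = N−2α−ρ`. -/
theorem overlap_racah_polynomial_tilde (N : ℕ) (hN : 1 ≤ N) (α β ζ ρ : ℝ)
    (h1 : ∀ z : ℤ, β + ρ ≠ (z : ℝ))
    (h2 : ∀ z : ℤ, 2 * α + ρ ≠ (z : ℝ))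
    (h3 : ∀ z : ℤ, 2 * β + 2 * ζ ≠ (z : ℝ))
    (h4 : ∀ z : ℤ, 2 * α + β + 2 * ζ ≠ (z : ℝ))
    (h5 : ∀ z : ℤ, 2 * α - β ≠ (z : ℝ))
    (h6 : ∀ z : ℤ, β + 2 * ζ - ρ ≠ (z : ℝ))
    (ah bh ch : ℝ)
    (hah : ah = -β - ρ - 1) (hbh : bh = -β + ρ - 2 * ζ - 1) (hch : ch = (N : ℝ) - 2 * α - ρ)
    (m n : ℕ) (hm : m ≤ N) (hn : n ≤ N)
    (f : Fin (N + 1) → ℝ) (estar : Fin (N + 1) → ℝ)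
    (hf : ∀ ℓ : Fin (N + 1), f ℓ =
      (poch (β + ρ - (N : ℝ) + 1) (N - n)
          / (poch ((n : ℝ) - (N : ℝ)) (N - n)
              * poch (2 * α + ρ - (N : ℝ) - (n : ℝ)) (N - n)))
        * (poch ((n : ℝ) - (N : ℝ)) (N - ℓ)
            * poch (2 * α + ρ - (N : ℝ) - (n : ℝ)) (N - ℓ)
          / poch (β + ρ - (N : ℝ) + 1) (N - ℓ)))
    (hes : ∀ ℓ : Fin (N + 1), estar ℓ =
      (poch (-(N : ℝ)) (N - m) * poch ((m : ℝ) + (N : ℝ) - 2 * α - β - 2 * ζ) (N - m)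
          / poch (2 * β + 2 * ζ - (N : ℝ) - (m : ℝ) + 1) (N - m))
        * (poch ((m : ℝ) - (N : ℝ)) (N - ℓ)
            * poch (2 * β + 2 * ζ - (N : ℝ) - (m : ℝ) + 1) (N - ℓ)
          / ((Nat.factorial (N - ℓ) : ℝ) * poch (-(N : ℝ)) (N - ℓ)
              * poch (2 * α + β + 2 * ζ - 2 * (N : ℝ) + 1) (N - ℓ)))) :
    (∑ ℓ : Fin (N + 1), f ℓ * estar ℓ)
      = (-1 : ℝ) ^ N * poch (-(N : ℝ)) (N - m) * poch (ch - ah - (N : ℝ)) (N - m)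
          * poch (-bh - (N : ℝ)) (N - m) * poch (ah + 1) m
          * poch (-ch - bh - (n : ℝ)) n
        / (poch (-(N : ℝ) - (m : ℝ) - ah - bh - 1) (N - m)
            * poch ((n : ℝ) - (N : ℝ)) (N - n) * poch (-ch - (n : ℝ)) (N - n)
            * poch (ch - ah - (N : ℝ)) n * poch (-(N : ℝ) - bh) n)
        * racah ah bh ch N m n := by
  subst hah hbh hch
  have hbca' : ∀ z : ℤ, (2*α+ρ) + (2*β+2*ζ) - (β+ρ) ≠ (z : ℝ) :=
    fun z h0 => h4 z (by linarith)
  have hab' : ∀ z : ℤ, (β+ρ) - (2*α+ρ) ≠ (z : ℝ) :=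
    fun z h0 => h5 (-z) (by push_cast; linarith)
  have hac' : ∀ z : ℤ, (β+ρ) - (2*β+2*ζ) ≠ (z : ℝ) :=
    fun z h0 => h6 (-z) (by push_cast; linarith)
  have CORE := core N m n hm hn (β+ρ) (2*α+ρ) (2*β+2*ζ) h1 h2 h3 hbca' hab' hac'
  have hracah : racah (-β-ρ-1) (-β+ρ-2*ζ-1) ((N:ℝ)-2*α-ρ) N m n
      = ∑ k ∈ Finset.range (m+1),
          poch (-(m:ℝ)) k * poch ((m:ℝ)-(2*β+2*ζ)-1) k * poch (-(n:ℝ)) k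
            * poch ((n:ℝ)-(2*α+ρ)) k
            / (poch (-(β+ρ)) k * poch (-(N:ℝ)) k
                * poch ((N:ℝ)+(β+ρ)-(2*α+ρ)-(2*β+2*ζ)) k * (k.factorial : ℝ)) := by
    rw [racah]
    apply Finset.sum_congr rfl
    intro k _
    rw [pcongr (show (m:ℝ)+(-β-ρ-1)+(-β+ρ-2*ζ-1)+1 = (m:ℝ)-(2*β+2*ζ)-1 by ring) k,
        pcongr (show (n:ℝ)+((N:ℝ)-2*α-ρ)-(N:ℝ) = (n:ℝ)-(2*α+ρ) by ring) k,
        pcongr (show -β-ρ-1+1 = -(β+ρ) by ring) k,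
        pcongr (show -β+ρ-2*ζ-1+((N:ℝ)-2*α-ρ)+1 = (N:ℝ)+(β+ρ)-(2*α+ρ)-(2*β+2*ζ) by ring) k]
    ring
  have hLHS : (∑ ℓ : Fin (N + 1), f ℓ * estar ℓ)
      = ((poch (β + ρ - (N : ℝ) + 1) (N - n)
          / (poch ((n : ℝ) - (N : ℝ)) (N - n)
              * poch (2 * α + ρ - (N : ℝ) - (n : ℝ)) (N - n)))
        * (poch (-(N : ℝ)) (N - m) * poch ((m : ℝ) + (N : ℝ) - 2 * α - β - 2 * ζ) (N - m)
          / poch (2 * β + 2 * ζ - (N : ℝ) - (m : ℝ) + 1) (N - m)))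
        * ∑ j ∈ Finset.range (N+1),
            poch ((n:ℝ)-(N:ℝ)) j * poch ((m:ℝ)-(N:ℝ)) j * poch ((2*α+ρ)-(N:ℝ)-(n:ℝ)) j
              * poch ((2*β+2*ζ)+1-(N:ℝ)-(m:ℝ)) j
              / (poch ((β+ρ)+1-(N:ℝ)) j * poch (-(N:ℝ)) j
                  * poch ((2*α+ρ)+(2*β+2*ζ)-(β+ρ)+1-2*(N:ℝ)) j * (j.factorial : ℝ)) := by
    have h0 : (∑ ℓ : Fin (N + 1), f ℓ * estar ℓ)
        = ∑ k ∈ Finset.range (N+1),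
            (poch (β + ρ - (N : ℝ) + 1) (N - n)
              / (poch ((n:ℝ)-(N:ℝ)) (N - n) * poch (2*α+ρ-(N:ℝ)-(n:ℝ)) (N - n))
              * (poch ((n:ℝ)-(N:ℝ)) (N - k) * poch (2*α+ρ-(N:ℝ)-(n:ℝ)) (N - k)
                  / poch (β+ρ-(N:ℝ)+1) (N - k)))
            * (poch (-(N:ℝ)) (N - m) * poch ((m:ℝ)+(N:ℝ)-2*α-β-2*ζ) (N - m)
                / poch (2*β+2*ζ-(N:ℝ)-(m:ℝ)+1) (N - m)
              * (poch ((m:ℝ)-(N:ℝ)) (N - k) * poch (2*β+2*ζ-(N:ℝ)-(m:ℝ)+1) (N - k)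
                / ((Nat.factorial (N - k) : ℝ) * poch (-(N:ℝ)) (N - k)
                    * poch (2*α+β+2*ζ-2*(N:ℝ)+1) (N - k)))) := by
      rw [← Fin.sum_univ_eq_sum_range]
      exact Finset.sum_congr rfl (fun ℓ _ => by rw [hf ℓ, hes ℓ])
    rw [h0, ← Finset.sum_range_reflect]
    rw [Finset.mul_sum]
    apply Finset.sum_congr rfl
    intro j hj
    rw [Finset.mem_range] at hj
    rw [show N + 1 - 1 - j = N - j by omega, show N - (N - j) = j by omega]
    rw [pcongr (show β+ρ-(N:ℝ)+1 = (β+ρ)+1-(N:ℝ) by ring) j,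
        pcongr (show 2*β+2*ζ-(N:ℝ)-(m:ℝ)+1 = (2*β+2*ζ)+1-(N:ℝ)-(m:ℝ) by ring) j,
        pcongr (show 2*α+β+2*ζ-2*(N:ℝ)+1 = (2*α+ρ)+(2*β+2*ζ)-(β+ρ)+1-2*(N:ℝ) by ring) j]
    ring
  rw [hLHS, hracah, CORE]
  -- normalize prefactor bases in the goal
  rw [pcongr (show (N:ℝ)-2*α-ρ-(-β-ρ-1)-(N:ℝ) = β+ρ+1-(2*α+ρ) by ring) (N-m),
      pcongr (show -(-β+ρ-2*ζ-1)-(N:ℝ) = 2*β+2*ζ+1-(β+ρ)-(N:ℝ) by ring) (N-m),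
      pcongr (show -β-ρ-1+1 = -(β+ρ) by ring) m,
      pcongr (show -((N:ℝ)-2*α-ρ)-(-β+ρ-2*ζ-1)-(n:ℝ) = 2*α+ρ+(2*β+2*ζ)-(β+ρ)+1-(N:ℝ)-(n:ℝ) by ring) n,
      pcongr (show -(N:ℝ)-(m:ℝ)-(-β-ρ-1)-(-β+ρ-2*ζ-1)-1 = 2*β+2*ζ-(N:ℝ)-(m:ℝ)+1 by ring) (N-m),
      pcongr (show -((N:ℝ)-2*α-ρ)-(n:ℝ) = 2*α+ρ-(N:ℝ)-(n:ℝ) by ring) (N-n),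
      pcongr (show (N:ℝ)-2*α-ρ-(-β-ρ-1)-(N:ℝ) = β+ρ+1-(2*α+ρ) by ring) n,
      pcongr (show -(N:ℝ)-(-β+ρ-2*ζ-1) = 2*β+2*ζ+1-(β+ρ)-(N:ℝ) by ring) n]
  have SC : (poch (β + ρ - (N : ℝ) + 1) (N - n)
        / (poch ((n:ℝ)-(N:ℝ)) (N - n) * poch (2*α+ρ-(N:ℝ)-(n:ℝ)) (N - n)))
      * (poch (-(N:ℝ)) (N - m) * poch ((m:ℝ)+(N:ℝ)-2*α-β-2*ζ) (N - m)
          / poch (2*β+2*ζ-(N:ℝ)-(m:ℝ)+1) (N - m))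
      = ((-1:ℝ)^N * poch (-(N:ℝ)) (N-m) * poch (β+ρ+1-(2*α+ρ)) (N-m)
            * poch (2*β+2*ζ+1-(β+ρ)-(N:ℝ)) (N-m) * poch (-(β+ρ)) m
            * poch (2*α+ρ+(2*β+2*ζ)-(β+ρ)+1-(N:ℝ)-(n:ℝ)) n
          / (poch (2*β+2*ζ-(N:ℝ)-(m:ℝ)+1) (N-m) * poch ((n:ℝ)-(N:ℝ)) (N-n)
              * poch (2*α+ρ-(N:ℝ)-(n:ℝ)) (N-n) * poch (β+ρ+1-(2*α+ρ)) n
              * poch (2*β+2*ζ+1-(β+ρ)-(N:ℝ)) n))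
        * (poch ((2*β+2*ζ)+1-(β+ρ)-(m:ℝ)) m * poch ((N:ℝ)+(β+ρ)+1-(2*α+ρ)-(m:ℝ)) m
            / (poch (-(β+ρ)) m * poch ((N:ℝ)+(β+ρ)-(2*α+ρ)-(2*β+2*ζ)) m))
        * ((poch ((N:ℝ)+(n:ℝ)+(β+ρ)-(2*α+ρ)-(2*β+2*ζ)) (N-n) * poch ((n:ℝ)-(β+ρ)) (N-n))
            / (poch (β+ρ-(2*β+2*ζ)) (N-n)
                * poch (2*α+ρ-(N:ℝ)-(β+ρ)) (N-n))) := by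
    have q1 : ∀ k, poch (-(β+ρ)) k ≠ 0 := fun k => poch_ne_zero_of_noninteger
      (fun z h0 => h1 (-z) (by push_cast; linarith)) k
    have q2 : ∀ k, poch (β+ρ-(N:ℝ)+1) k ≠ 0 := fun k => poch_ne_zero_of_noninteger
      (fun z h0 => h1 (z + (N:ℤ) - 1) (by push_cast; linarith)) k
    have q3 : ∀ k, poch ((N:ℝ)+(β+ρ)-(2*α+ρ)-(2*β+2*ζ)) k ≠ 0 := fun k => poch_ne_zero_of_noninteger
      (fun z h0 => h4 ((N:ℤ) - z) (by push_cast; linarith)) k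
    have q4 : ∀ k, poch (β+ρ+1-(2*α+ρ)) k ≠ 0 := fun k => poch_ne_zero_of_noninteger
      (fun z h0 => h5 (1 - z) (by push_cast; linarith)) k
    have q5 : ∀ k, poch (2*β+2*ζ+1-(β+ρ)-(N:ℝ)) k ≠ 0 := fun k => poch_ne_zero_of_noninteger
      (fun z h0 => h6 (z - 1 + (N:ℤ)) (by push_cast; linarith)) k
    have q6 : ∀ k, poch (2*β+2*ζ-(N:ℝ)-(m:ℝ)+1) k ≠ 0 := fun k => poch_ne_zero_of_noninteger
      (fun z h0 => h3 (z + (N:ℤ) + (m:ℤ) - 1) (by push_cast; linarith)) k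
    have q7 : ∀ k, poch (2*α+ρ-(N:ℝ)-(n:ℝ)) k ≠ 0 := fun k => poch_ne_zero_of_noninteger
      (fun z h0 => h2 (z + (N:ℤ) + (n:ℤ)) (by push_cast; linarith)) k
    have q8 : poch ((n:ℝ)-(N:ℝ)) (N-n) ≠ 0 := by
      rw [pcongr (show (n:ℝ)-(N:ℝ) = -((N-n : ℕ):ℝ) by push_cast [Nat.cast_sub hn]; ring) (N-n)]
      exact poch_neg_nat_ne_zero (le_refl (N-n))
    have q9 : poch (-(N:ℝ)) (N-m) ≠ 0 := poch_neg_nat_ne_zero (by omega)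
    have hD1 : poch ((m:ℝ)+(N:ℝ)-2*α-β-2*ζ) (N-m)
        = poch ((N:ℝ)+(β+ρ)-(2*α+ρ)-(2*β+2*ζ)) N / poch ((N:ℝ)+(β+ρ)-(2*α+ρ)-(2*β+2*ζ)) m := by
      rw [eq_div_iff (q3 m)]
      have hs := poch_add ((N:ℝ)+(β+ρ)-(2*α+ρ)-(2*β+2*ζ)) m (N-m)
      rw [show m + (N-m) = N by omega] at hs
      rw [hs, pcongr (show (N:ℝ)+(β+ρ)-(2*α+ρ)-(2*β+2*ζ)+(m:ℝ) = (m:ℝ)+(N:ℝ)-2*α-β-2*ζ by ring) (N-m)]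
      ring
    have hD2 : poch (2*α+ρ+(2*β+2*ζ)-(β+ρ)+1-(N:ℝ)-(n:ℝ)) n
        = (-1:ℝ)^n * poch ((N:ℝ)+(β+ρ)-(2*α+ρ)-(2*β+2*ζ)) n := by
      rw [poch_reverse (2*α+ρ+(2*β+2*ζ)-(β+ρ)+1-(N:ℝ)-(n:ℝ)) n,
          pcongr (show 1-(2*α+ρ+(2*β+2*ζ)-(β+ρ)+1-(N:ℝ)-(n:ℝ))-(n:ℝ) = (N:ℝ)+(β+ρ)-(2*α+ρ)-(2*β+2*ζ) by ring) n]
    have hD3 : poch ((N:ℝ)+(n:ℝ)+(β+ρ)-(2*α+ρ)-(2*β+2*ζ)) (N-n)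
        = poch ((N:ℝ)+(β+ρ)-(2*α+ρ)-(2*β+2*ζ)) N / poch ((N:ℝ)+(β+ρ)-(2*α+ρ)-(2*β+2*ζ)) n := by
      rw [eq_div_iff (q3 n)]
      have hs := poch_add ((N:ℝ)+(β+ρ)-(2*α+ρ)-(2*β+2*ζ)) n (N-n)
      rw [show n + (N-n) = N by omega] at hs
      rw [hs, pcongr (show (N:ℝ)+(β+ρ)-(2*α+ρ)-(2*β+2*ζ)+(n:ℝ) = (N:ℝ)+(n:ℝ)+(β+ρ)-(2*α+ρ)-(2*β+2*ζ) by ring) (N-n)]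
      ring
    have hD4 : poch ((2*β+2*ζ)+1-(β+ρ)-(m:ℝ)) m
        = poch (2*β+2*ζ+1-(β+ρ)-(N:ℝ)) N / poch (2*β+2*ζ+1-(β+ρ)-(N:ℝ)) (N-m) := by
      rw [eq_div_iff (q5 (N-m))]
      have hs := poch_add (2*β+2*ζ+1-(β+ρ)-(N:ℝ)) (N-m) m
      rw [show (N-m) + m = N by omega] at hs
      rw [hs, pcongr (show 2*β+2*ζ+1-(β+ρ)-(N:ℝ)+((N-m : ℕ):ℝ) = (2*β+2*ζ)+1-(β+ρ)-(m:ℝ) by push_cast [Nat.cast_sub hm]; ring) m]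
      ring
    have hD5 : poch ((N:ℝ)+(β+ρ)+1-(2*α+ρ)-(m:ℝ)) m
        = poch (β+ρ+1-(2*α+ρ)) N / poch (β+ρ+1-(2*α+ρ)) (N-m) := by
      rw [eq_div_iff (q4 (N-m))]
      have hs := poch_add (β+ρ+1-(2*α+ρ)) (N-m) m
      rw [show (N-m) + m = N by omega] at hs
      rw [hs, pcongr (show β+ρ+1-(2*α+ρ)+((N-m : ℕ):ℝ) = (N:ℝ)+(β+ρ)+1-(2*α+ρ)-(m:ℝ) by push_cast [Nat.cast_sub hm]; ring) m]
      ring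
    have hD6 : poch (β+ρ-(2*β+2*ζ)) (N-n)
        = (-1:ℝ)^(N-n) * (poch (2*β+2*ζ+1-(β+ρ)-(N:ℝ)) N / poch (2*β+2*ζ+1-(β+ρ)-(N:ℝ)) n) := by
      have hs := poch_add (2*β+2*ζ+1-(β+ρ)-(N:ℝ)) n (N-n)
      rw [show n + (N-n) = N by omega] at hs
      rw [poch_reverse (β+ρ-(2*β+2*ζ)) (N-n),
          pcongr (show 1-(β+ρ-(2*β+2*ζ))-((N-n : ℕ):ℝ) = 2*β+2*ζ+1-(β+ρ)-(N:ℝ)+(n:ℝ) by push_cast [Nat.cast_sub hn]; ring) (N-n),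
          hs, mul_div_cancel_left₀ _ (q5 n)]
    have hD7 : poch (2*α+ρ-(N:ℝ)-(β+ρ)) (N-n)
        = (-1:ℝ)^(N-n) * (poch (β+ρ+1-(2*α+ρ)) N / poch (β+ρ+1-(2*α+ρ)) n) := by
      have hs := poch_add (β+ρ+1-(2*α+ρ)) n (N-n)
      rw [show n + (N-n) = N by omega] at hs
      rw [poch_reverse (2*α+ρ-(N:ℝ)-(β+ρ)) (N-n),
          pcongr (show 1-(2*α+ρ-(N:ℝ)-(β+ρ))-((N-n : ℕ):ℝ) = β+ρ+1-(2*α+ρ)+(n:ℝ) by push_cast [Nat.cast_sub hn]; ring) (N-n),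
          hs, mul_div_cancel_left₀ _ (q4 n)]
    have hD8 : poch ((n:ℝ)-(β+ρ)) (N-n)
        = (-1:ℝ)^(N-n) * poch (β+ρ-(N:ℝ)+1) (N-n) := by
      rw [poch_reverse ((n:ℝ)-(β+ρ)) (N-n),
          pcongr (show 1-((n:ℝ)-(β+ρ))-((N-n : ℕ):ℝ) = β+ρ-(N:ℝ)+1 by push_cast [Nat.cast_sub hn]; ring) (N-n)]
    have hsign : ((-1:ℝ))^N = (-1)^n * (-1)^(N-n) := by
      rw [← pow_add]; congr 1; omega
    have hsq : ((-1:ℝ))^(N-n) * (-1)^(N-n) = 1 := neg_one_sq_pow (N-n)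
    rw [hD1, hD2, hD3, hD4, hD5, hD6, hD7, hD8, hsign]
    have hne : ((-1:ℝ))^(N-n) ≠ 0 := pow_ne_zero _ (by norm_num)
    have hne2 : ((-1:ℝ))^n ≠ 0 := pow_ne_zero _ (by norm_num)
    field_simp
    ring_nf
    have e1 : ((-1:ℝ))^(n*2) = 1 := by
      rw [pow_mul, sq]; exact neg_one_sq_pow n
    have e2 : ((-1:ℝ))^((N-n)*4) = 1 := by
      have h4' : ((-1:ℝ))^((N-n)*4) = (((-1:ℝ))^(N-n) * (-1)^(N-n))^2 := by ring
      rw [h4', neg_one_sq_pow (N-n)]; norm_num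
    rw [e1]
    have r1 : ∀ k, poch (-β-ρ) k ≠ 0 := fun k => poch_ne_zero_of_noninteger
      (fun z h0 => h1 (-z) (by push_cast; linarith)) k
    have r2 : ∀ k, poch (-β+(N:ℝ)+(-(α*2)-ζ*2)) k ≠ 0 := fun k => poch_ne_zero_of_noninteger
      (fun z h0 => h4 ((N:ℤ) - z) (by push_cast; linarith)) k
    have r3 : ∀ k, poch (1+(β-α*2)) k ≠ 0 := fun k => poch_ne_zero_of_noninteger
      (fun z h0 => h5 (1 - z) (by push_cast; linarith)) k
    have r4 : ∀ k, poch (1+β+(-ρ-(N:ℝ))+ζ*2) k ≠ 0 := fun k => poch_ne_zero_of_noninteger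
      (fun z h0 => h6 (z - 1 + (N:ℤ)) (by push_cast; linarith)) k
    have r5 : ∀ k, poch (1+(β*2-(N:ℝ))+(ζ*2-(m:ℝ))) k ≠ 0 := fun k => poch_ne_zero_of_noninteger
      (fun z h0 => h3 (z - 1 + (N:ℤ) + (m:ℤ)) (by push_cast; linarith)) k
    have r6 : poch (-(N:ℝ)+(n:ℝ)) (N-n) ≠ 0 := by
      rw [pcongr (show -(N:ℝ)+(n:ℝ) = -((N-n : ℕ):ℝ) by push_cast [Nat.cast_sub hn]; ring) (N-n)]
      exact poch_neg_nat_ne_zero (le_refl (N-n))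
    have r7 : ∀ k, poch (ρ-(N:ℝ)+(α*2-(n:ℝ))) k ≠ 0 := fun k => poch_ne_zero_of_noninteger
      (fun z h0 => h2 (z + (N:ℤ) + (n:ℤ)) (by push_cast; linarith)) k
    have hone : (poch (1+(β-α*2)) (N-m) * (poch (1+(β-α*2)) (N-m))⁻¹)
        * (poch (1+β+(-ρ-(N:ℝ))+ζ*2) (N-m) * (poch (1+β+(-ρ-(N:ℝ))+ζ*2) (N-m))⁻¹)
        * (poch (-β-ρ) m * (poch (-β-ρ) m)⁻¹)
        * (poch (-β+(N:ℝ)+(-(α*2)-ζ*2)) n * (poch (-β+(N:ℝ)+(-(α*2)-ζ*2)) n)⁻¹)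
        * (poch (1+β+(-ρ-(N:ℝ))+ζ*2) N * (poch (1+β+(-ρ-(N:ℝ))+ζ*2) N)⁻¹)
        * (poch (1+(β-α*2)) N * (poch (1+(β-α*2)) N)⁻¹)
        * (poch (1+β+(-ρ-(N:ℝ))+ζ*2) n * (poch (1+β+(-ρ-(N:ℝ))+ζ*2) n)⁻¹)
        * (poch (1+(β-α*2)) n * (poch (1+(β-α*2)) n)⁻¹) = 1 := by
      rw [mul_inv_cancel₀ (r3 (N-m)), mul_inv_cancel₀ (r4 (N-m)), mul_inv_cancel₀ (r1 m),
          mul_inv_cancel₀ (r2 n), mul_inv_cancel₀ (r4 N), mul_inv_cancel₀ (r3 N),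
          mul_inv_cancel₀ (r4 n), mul_inv_cancel₀ (r3 n)]
      norm_num
    linear_combination (norm := ring_nf) (-(poch (1+β+(ρ-(N:ℝ))) (N-n)
        * poch (-β+(N:ℝ)+(-(α*2)-ζ*2)) N
        * (poch (ρ-(N:ℝ)+(α*2-(n:ℝ))) (N-n))⁻¹ * (poch (-β+(N:ℝ)+(-(α*2)-ζ*2)) m)⁻¹
        * (poch (1+(β*2-(N:ℝ))+(ζ*2-(m:ℝ))) (N-m))⁻¹)) * hone
  linear_combination (∑ j ∈ Finset.range (N+1),
            poch ((n:ℝ)-(N:ℝ)) j * poch ((m:ℝ)-(N:ℝ)) j * poch ((2*α+ρ)-(N:ℝ)-(n:ℝ)) j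
              * poch ((2*β+2*ζ)+1-(N:ℝ)-(m:ℝ)) j
              / (poch ((β+ρ)+1-(N:ℝ)) j * poch (-(N:ℝ)) j
                  * poch ((2*α+ρ)+(2*β+2*ζ)-(β+ρ)+1-2*(N:ℝ)) j * (j.factorial : ℝ))) * SC
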